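/- Consider ℝ² with the distance d₄((x,s),(y,t)) = ((y−x)⁴ + (t−s)²)^{1/4}. There exists a set A ⊆ ℝ² whose diameter with respect to d₄ is at most 2 and whose 2-dimensional Lebesgue measure is strictly greater than the Lebesgue measure of the unit ball B̄ = {(x,t) : x⁴ + t² ≤ 1}. Hence the unit ball of d₄ is not isodiametric. -/
import Mathlib


open MeasureTheory

/-- The Koranyi-type distance on the parabolic plane. -/
noncomputable def dFour (p q : ℝ × ℝ) : ℝ :=
  ((q.1 - p.1) ^ 4 + (q.2 - p.2) ^ 2) ^ ((1 : ℝ) / 4)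

/-- For the distance `d₄((x,s),(y,t)) = ((y-x)⁴ + (t-s)²)^{1/4}` on
`ℝ²`, there is a set of `d₄`-diameter at most `2` whose Lebesgue measure is strictly
larger than that of the unit ball `{(x,t) : x⁴ + t² ≤ 1}`; hence the unit ball of
`d₄` is not isodiametric. -/
theorem statement_15 :
    ∃ A : Set (ℝ × ℝ),
      (∀ p ∈ A, ∀ q ∈ A, dFour p q ≤ 2) ∧
      volume {p : ℝ × ℝ | p.1 ^ 4 + p.2 ^ 2 ≤ 1} < volume A := by
  refine ⟨(Set.Icc (-(4/5)) (4/5)) ×ˢ (Set.Icc 0 3), ?_, ?_⟩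
  · rintro p ⟨hp1, hp2⟩ q ⟨hq1, hq2⟩
    simp only [Set.mem_Icc] at hp1 hp2 hq1 hq2
    have hx : (q.1 - p.1) ^ 4 ≤ (8/5) ^ 4 := by
      have h1 : |q.1 - p.1| ≤ 8/5 := by
        rw [abs_le]; constructor <;> linarith [hp1.1, hp1.2, hq1.1, hq1.2]
      calc (q.1 - p.1) ^ 4 = |q.1 - p.1| ^ 4 := by
            rw [← abs_pow, abs_of_nonneg (by positivity)]
        _ ≤ (8/5) ^ 4 := by
            exact pow_le_pow_left₀ (abs_nonneg _) h1 4
    have ht : (q.2 - p.2) ^ 2 ≤ 9 := by nlinarith [hp2.1, hp2.2, hq2.1, hq2.2]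
    have hsum : (q.1 - p.1) ^ 4 + (q.2 - p.2) ^ 2 ≤ 16 := by
      norm_num at hx; linarith
    have h16 : (16 : ℝ) ^ ((1:ℝ)/4) = 2 := by
      have : (16 : ℝ) = 2 ^ (4 : ℝ) := by norm_num [Real.rpow_natCast]
      rw [this, ← Real.rpow_mul (by norm_num)]
      norm_num
    calc dFour p q ≤ (16 : ℝ) ^ ((1:ℝ)/4) := by
          apply Real.rpow_le_rpow (by positivity) hsum (by norm_num)
      _ = 2 := h16
  · have hsub : {p : ℝ × ℝ | p.1 ^ 4 + p.2 ^ 2 ≤ 1} ⊆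
        (Set.Icc (-1 : ℝ) 1) ×ˢ (Set.Icc (-1 : ℝ) 1) := by
      rintro ⟨x, t⟩ h
      simp only [Set.mem_setOf_eq] at h
      constructor <;> simp only [Set.mem_Icc] <;> constructor <;> nlinarith [sq_nonneg x, sq_nonneg t, sq_nonneg (x^2), sq_nonneg (x-1), sq_nonneg (x+1), sq_nonneg (x^2-1)]
    have hball : volume {p : ℝ × ℝ | p.1 ^ 4 + p.2 ^ 2 ≤ 1} ≤
        volume ((Set.Icc (-1 : ℝ) 1) ×ˢ (Set.Icc (-1 : ℝ) 1)) :=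
      measure_mono hsub
    have h1 : volume ((Set.Icc (-1 : ℝ) 1) ×ˢ (Set.Icc (-1 : ℝ) 1)) =
        ENNReal.ofReal 2 * ENNReal.ofReal 2 := by
      rw [MeasureTheory.Measure.volume_eq_prod, Measure.prod_prod,
        Real.volume_Icc]
      norm_num
    have h2 : volume ((Set.Icc (-(4/5) : ℝ) (4/5)) ×ˢ (Set.Icc (0 : ℝ) 3)) =
        ENNReal.ofReal (8/5) * ENNReal.ofReal 3 := by
      rw [MeasureTheory.Measure.volume_eq_prod, Measure.prod_prod,
        Real.volume_Icc]
      norm_num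
    calc volume {p : ℝ × ℝ | p.1 ^ 4 + p.2 ^ 2 ≤ 1}
        ≤ ENNReal.ofReal 2 * ENNReal.ofReal 2 := h1 ▸ hball
      _ < ENNReal.ofReal (8/5) * ENNReal.ofReal 3 := by
          rw [← ENNReal.ofReal_mul (by norm_num), ← ENNReal.ofReal_mul (by norm_num)]
          exact ENNReal.ofReal_lt_ofReal_iff (by norm_num) |>.mpr (by norm_num)
      _ = volume ((Set.Icc (-(4/5) : ℝ) (4/5)) ×ˢ (Set.Icc (0 : ℝ) 3)) := h2.symm
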